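/- In the regret game, if 1/p ≤ v ≤ (1/p)·(1 + κ·(1−p)), then the profile in which every player chooses safe is a pure strategy Nash equilibrium, and the profile in which every player chooses risky is a pure strategy Nash equilibrium. -/

import Mathlib

namespace RegretGame

/-- An action in the regret game: choose the risky lottery or the safe lottery. -/
inductive Act : Type
  | risky : Act
  | safe : Act
deriving DecidableEq, Repr

/-- `numRisky a i` is the number of players other than `i` choosing the risky lottery
at the action profile `a`. -/
def numRisky {N : ℕ} (a : Fin N → Act) (i : Fin N) : ℕ :=
  (Finset.univ.filter (fun j => j ≠ i ∧ a j = Act.risky)).card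

/-- Player `i`'s expected payoff in the regret game at action profile `a`, given the
success probability `p`, coefficient of regret aversion `κ`, normalized good-state
payoff `v` of the risky lottery, and the information function `q` (the probability of
learning the risky outcome, as a function of how many of the others chose risky). -/
noncomputable def payoff {N : ℕ} (p κ v : ℝ) (q : ℕ → ℝ)
    (a : Fin N → Act) (i : Fin N) : ℝ :=
  if a i = Act.risky then p * v - (1 - p) * κ
  else 1 - p * q (numRisky a i) * κ * (v - 1)

/-- A pure strategy Nash equilibrium of the regret game: no player can strictly
increase her expected payoff by unilaterally changing her own action. -/
def IsNash {N : ℕ} (p κ v : ℝ) (q : ℕ → ℝ) (a : Fin N → Act) : Prop :=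
  ∀ (i : Fin N) (b : Act),
    payoff p κ v q (Function.update a i b) i ≤ payoff p κ v q a i

/-!
At the all-safe profile a deviator to risky gets `p v - (1 - p) κ` against the safe payoff `1`
(nobody else reveals the risky outcome, `q 0 = 0`); this is the upper bound on `v`. At the
all-risky profile a deviator to safe surely learns the outcome (`q (N - 1) = 1`) and gets
`1 - p κ (v - 1)`, which is at most the risky payoff iff `(1 + κ) (p v - 1) ≥ 0`, i.e. the lower
bound on `v`.
-/

variable {N : ℕ} {p κ v : ℝ} {q : ℕ → ℝ}

theorem numRisky_update_self (a : Fin N → Act) (i : Fin N) (b : Act) :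
    numRisky (Function.update a i b) i = numRisky a i := by
  unfold numRisky
  congr 1
  ext j
  by_cases hj : j = i <;> simp [hj]

@[simp]
theorem numRisky_const_safe (i : Fin N) : numRisky (fun _ : Fin N => Act.safe) i = 0 := by
  simp [numRisky]

@[simp]
theorem numRisky_const_risky (i : Fin N) :
    numRisky (fun _ : Fin N => Act.risky) i = N - 1 := by
  simp [numRisky, Finset.filter_ne']

theorem payoff_update_risky (a : Fin N → Act) (i : Fin N) :
    payoff p κ v q (Function.update a i Act.risky) i = p * v - (1 - p) * κ := by
  simp [payoff]

theorem payoff_update_safe (a : Fin N → Act) (i : Fin N) :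
    payoff p κ v q (Function.update a i Act.safe) i = 1 - p * q (numRisky a i) * κ * (v - 1) := by
  simp [payoff, numRisky_update_self]

theorem isNash_of_forall_ne {a : Fin N → Act}
    (h : ∀ i b, b ≠ a i → payoff p κ v q (Function.update a i b) i ≤ payoff p κ v q a i) :
    IsNash p κ v q a := by
  intro i b
  by_cases hb : b = a i
  · simp [hb]
  · exact h i b hb

theorem isNash_const_safe (hq0 : q 0 = 0) (h : p * v - (1 - p) * κ ≤ 1) :
    IsNash p κ v q (fun _ : Fin N => Act.safe) := by
  refine isNash_of_forall_ne fun i b hb => ?_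
  obtain rfl : b = Act.risky := by cases b <;> simp_all
  have hstay : payoff p κ v q (fun _ : Fin N => Act.safe) i = 1 := by
    simp [payoff, hq0]
  rwa [payoff_update_risky, hstay]

theorem isNash_const_risky (hqN : q (N - 1) = 1)
    (h : 1 - p * κ * (v - 1) ≤ p * v - (1 - p) * κ) :
    IsNash p κ v q (fun _ : Fin N => Act.risky) := by
  refine isNash_of_forall_ne fun i b hb => ?_
  obtain rfl : b = Act.safe := by cases b <;> simp_all
  have hstay : payoff p κ v q (fun _ : Fin N => Act.risky) i = p * v - (1 - p) * κ := by
    simp [payoff]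
  rwa [payoff_update_safe, numRisky_const_risky, hqN, mul_one, hstay]

theorem regret_game_coordination_general
    (N : ℕ) (p κ v : ℝ)
    (hp : 0 < p ∧ p < 1) (hκ : 0 < κ)
    (q : ℕ → ℝ)
    (hq0 : q 0 = 0) (hqN : q (N - 1) = 1)
    (hlo : 1 / p ≤ v) (hhi : v ≤ (1 / p) * (1 + κ * (1 - p))) :
    IsNash p κ v q (fun _ : Fin N => Act.safe) ∧
    IsNash p κ v q (fun _ : Fin N => Act.risky) := by
  have hpv_lo : 1 ≤ p * v := by
    rwa [div_le_iff₀ hp.1, mul_comm] at hlo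
  have hpv_hi : p * v ≤ 1 + κ * (1 - p) := by
    rwa [one_div_mul_eq_div, le_div_iff₀ hp.1, mul_comm] at hhi
  have hrisky_gain : 0 ≤ κ * (p * v - 1) := mul_nonneg hκ.le (sub_nonneg.2 hpv_lo)
  exact ⟨isNash_const_safe hq0 (by linarith), isNash_const_risky hqN (by linarith)⟩

/-- **Theorem 3, part 3.** If `1/p ≤ v ≤ (1/p)·(1 + κ·(1−p))`, then both the all-safe
profile and the all-risky profile are pure strategy Nash equilibria of the regret
game. -/
theorem regret_game_coordination
    (N : ℕ) (hN : 2 ≤ N) (p κ v : ℝ)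
    (hp : 0 < p ∧ p < 1) (hκ : 0 < κ) (hv : 1 < v)
    (q : ℕ → ℝ)
    (hq01 : ∀ m ≤ N - 1, 0 ≤ q m ∧ q m ≤ 1)
    (hq0 : q 0 = 0) (hqN : q (N - 1) = 1)
    (hqmono : ∀ m₁ m₂, m₁ < m₂ → m₂ ≤ N - 1 → q m₁ < q m₂)
    (hlo : 1 / p ≤ v) (hhi : v ≤ (1 / p) * (1 + κ * (1 - p))) :
    IsNash p κ v q (fun _ : Fin N => Act.safe) ∧
    IsNash p κ v q (fun _ : Fin N => Act.risky) :=
  regret_game_coordination_general N p κ v hp hκ q hq0 hqN hlo hhi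

end RegretGame
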